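/- arXiv:2412.10519 — 2 statements merged into one kernel-verified Lean document; each statement's English description precedes it below -/
import Mathlib

section
/- Let g and ḡ be curves on a matrix Lie group satisfying ġ = X_t(g) and d/dt ḡ = X_t(ḡ), where X_t is group-affine: X_t(hg) = h X_t(g) + X_t(h) g − h X_t(e) g for all g, h. Then the left-invariant error f = g⁻¹ḡ satisfies ḟ = X_t(f) − X_t(e) f. -/
/-!
Differentiating `f = g⁻¹ ḡ` gives `ḟ = -g⁻¹ X(g) f + g⁻¹ X(g f)`, since `ḡ = g f`. The
group-affine identity with `h = g` rewrites `g⁻¹ X(g f)` as `X(f) + g⁻¹ X(g) f - X(e) f`, and the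
terms in `g⁻¹ X(g) f` cancel.
-/

open Matrix

attribute [local instance] Matrix.linftyOpNormedRing Matrix.linftyOpNormedAlgebra

theorem HasDerivAt.ringInverse {𝕜 R : Type*} [NontriviallyNormedField 𝕜] [NormedRing R]
    [HasSummableGeomSeries R] [NormedAlgebra 𝕜 R] {g : 𝕜 → R} {g' : R} {t : 𝕜}
    (hg : HasDerivAt g g' t) (ht : IsUnit (g t)) :
    HasDerivAt (fun s => Ring.inverse (g s))
      (-(Ring.inverse (g t) * g' * Ring.inverse (g t))) t := by
  obtain ⟨u, hu⟩ := ht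
  have hinv := hasFDerivAt_ringInverse (𝕜 := 𝕜) u
  rw [hu] at hinv
  rw [← hu, Ring.inverse_unit]
  simpa [Function.comp_def] using hinv.comp_hasDerivAt t hg

def IsGroupAffineOn {R : Type*} [Ring R] (G : Set R) (X : R → R) : Prop :=
  ∀ g ∈ G, ∀ h ∈ G, X (h * g) = h * X g + X h * g - h * X 1 * g

theorem IsGroupAffineOn.inverse_mul_map_mul {R : Type*} [Ring R] {G : Set R} {X : R → R}
    (hX : IsGroupAffineOn G X) {u f : R} (hu : IsUnit u) (huG : u ∈ G) (hfG : f ∈ G) :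
    Ring.inverse u * X (u * f) = X f + Ring.inverse u * X u * f - X 1 * f := by
  rw [hX f hfG u huG]
  simp only [mul_add, mul_sub, ← mul_assoc, Ring.inverse_mul_cancel u hu, one_mul]

theorem HasDerivAt.ringInverse_mul_of_isGroupAffineOn {𝕜 R : Type*} [NontriviallyNormedField 𝕜]
    [NormedRing R] [HasSummableGeomSeries R] [NormedAlgebra 𝕜 R] {G : Set R} {X : R → R}
    (hX : IsGroupAffineOn G X) {g gbar : 𝕜 → R} {t : 𝕜}
    (hg : HasDerivAt g (X (g t)) t) (hgbar : HasDerivAt gbar (X (gbar t)) t)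
    (hunit : IsUnit (g t)) (hgG : g t ∈ G) (hfG : Ring.inverse (g t) * gbar t ∈ G) :
    HasDerivAt (fun s => Ring.inverse (g s) * gbar s)
      (X (Ring.inverse (g t) * gbar t) - X 1 * (Ring.inverse (g t) * gbar t)) t := by
  set f := Ring.inverse (g t) * gbar t
  have hgf : gbar t = g t * f := by
    rw [← mul_assoc, Ring.mul_inverse_cancel _ hunit, one_mul]
  convert (hg.ringInverse hunit).fun_mul hgbar using 1
  rw [congrArg X hgf, hX.inverse_mul_map_mul hunit hgG hfG, neg_mul, mul_assoc _ _ (gbar t)]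
  abel

theorem left_error_of_group_affine_general (n : ℕ) (G : Set (Matrix (Fin n) (Fin n) ℝ))
    (hmul : ∀ a ∈ G, ∀ b ∈ G, a * b ∈ G)
    (hinv : ∀ a ∈ G, a⁻¹ ∈ G)
    (X : ℝ → Matrix (Fin n) (Fin n) ℝ → Matrix (Fin n) (Fin n) ℝ)
    (hGA : ∀ t, ∀ g ∈ G, ∀ h ∈ G,
      X t (h * g) = h * X t g + X t h * g - h * X t 1 * g)
    (g gbar : ℝ → Matrix (Fin n) (Fin n) ℝ)
    (hgG : ∀ t, g t ∈ G) (hgbarG : ∀ t, gbar t ∈ G)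
    (hunit : ∀ t, IsUnit (g t))
    (hdg : ∀ t, HasDerivAt g (X t (g t)) t)
    (hdgbar : ∀ t, HasDerivAt gbar (X t (gbar t)) t) :
    ∀ t, HasDerivAt (fun s => (g s)⁻¹ * gbar s)
      (X t ((g t)⁻¹ * gbar t) - X t 1 * ((g t)⁻¹ * gbar t)) t := by
  intro t
  have hfG : (g t)⁻¹ * gbar t ∈ G := hmul _ (hinv _ (hgG t)) _ (hgbarG t)
  simp only [nonsing_inv_eq_ringInverse] at hfG ⊢
  exact (hdg t).ringInverse_mul_of_isGroupAffineOn (hGA t) (hdgbar t) (hunit t) (hgG t) hfG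

/-- If `X_t` is group-affine and `ġ = X_t(g)`, `d/dt ḡ = X_t(ḡ)`, then the
left-invariant error `f = g⁻¹ ḡ` satisfies `ḟ = X_t(f) − X_t(e) f`. -/
theorem left_error_of_group_affine (n : ℕ) (G : Set (Matrix (Fin n) (Fin n) ℝ))
    (hone : (1 : Matrix (Fin n) (Fin n) ℝ) ∈ G)
    (hmul : ∀ a ∈ G, ∀ b ∈ G, a * b ∈ G)
    (hinv : ∀ a ∈ G, a⁻¹ ∈ G)
    (X : ℝ → Matrix (Fin n) (Fin n) ℝ → Matrix (Fin n) (Fin n) ℝ)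
    (hGA : ∀ t, ∀ g ∈ G, ∀ h ∈ G,
      X t (h * g) = h * X t g + X t h * g - h * X t 1 * g)
    (g gbar : ℝ → Matrix (Fin n) (Fin n) ℝ)
    (hgG : ∀ t, g t ∈ G) (hgbarG : ∀ t, gbar t ∈ G)
    (hunit : ∀ t, IsUnit (g t))
    (hdg : ∀ t, HasDerivAt g (X t (g t)) t)
    (hdgbar : ∀ t, HasDerivAt gbar (X t (gbar t)) t) :
    ∀ t, HasDerivAt (fun s => (g s)⁻¹ * gbar s)
      (X t ((g t)⁻¹ * gbar t) - X t 1 * ((g t)⁻¹ * gbar t)) t :=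
  left_error_of_group_affine_general n G hmul hinv X hGA g gbar hgG hgbarG hunit hdg hdgbar
end

section
/- Let g and ḡ be curves on a matrix Lie group satisfying ġ = X_t(g) and d/dt ḡ = X_t(ḡ), where X_t is group-affine: X_t(hg) = h X_t(g) + X_t(h) g − h X_t(e) g for all g, h. Then the right-invariant error h = ḡg⁻¹ satisfies ḣ = X_t(h) − h X_t(e). -/
open Matrix

attribute [local instance] Matrix.linftyOpNormedRing Matrix.linftyOpNormedAlgebra

/-!
Differentiating `h = ḡ g⁻¹` with the product rule and `d(g⁻¹) = -g⁻¹ ġ g⁻¹` gives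
`ḣ = X(ḡ) g⁻¹ - h X(g) g⁻¹`. Since `ḡ = h g`, the group-affine identity for the pair `(h, g)`
expands `X(ḡ) g⁻¹` as `h X(g) g⁻¹ + X(h) - h X(e)`, and the `X(g)` terms cancel.
-/

section RingInverse

variable {𝕜 R : Type*} [NontriviallyNormedField 𝕜] [NormedRing R] [HasSummableGeomSeries R]
  [NormedAlgebra 𝕜 R]

theorem HasDerivAt.ringInverse_s7 {f : 𝕜 → R} {f' : R} {x : 𝕜} (hf : HasDerivAt f f' x)
    (hx : IsUnit (f x)) :
    HasDerivAt (fun s => Ring.inverse (f s))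
      (-(Ring.inverse (f x) * f' * Ring.inverse (f x))) x := by
  obtain ⟨u, hu⟩ := hx
  have hinv := hasFDerivAt_ringInverse (𝕜 := 𝕜) u
  rw [hu] at hinv
  simpa [← hu, Function.comp_def] using hinv.comp_hasDerivAt x hf

end RingInverse

theorem HasDerivAt.matrix_inv {𝕜 : Type*} [RCLike 𝕜]
    {m : Type*} [Fintype m] [DecidableEq m] {f : 𝕜 → Matrix m m 𝕜} {f' : Matrix m m 𝕜}
    {x : 𝕜} (hf : HasDerivAt f f' x) (hx : IsUnit (f x)) :
    HasDerivAt (fun s => (f s)⁻¹) (-((f x)⁻¹ * f' * (f x)⁻¹)) x := by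
  simp only [Matrix.nonsing_inv_eq_ringInverse]
  exact hf.ringInverse_s7 hx

def IsGroupAffine {R : Type*} [Ring R] (G : Set R) (X : R → R) : Prop :=
  ∀ g ∈ G, ∀ h ∈ G, X (h * g) = h * X g + X h * g - h * X 1 * g

theorem IsGroupAffine.apply_mul_inv_sub {R : Type*} [Ring R] {G : Set R} {X : R → R}
    (hX : IsGroupAffine G X) {a g g' : R} (hgg' : g * g' = 1) (hg'g : g' * g = 1) (hg : g ∈ G)
    (hag' : a * g' ∈ G) :
    X a * g' - a * g' * X g * g' = X (a * g') - a * g' * X 1 := by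
  have h := hX g hg (a * g') hag'
  rw [mul_assoc a, hg'g, mul_one] at h
  rw [h]
  simp only [add_mul, sub_mul, mul_assoc, hgg', mul_one]
  abel

theorem right_error_of_group_affine_general (n : ℕ) (G : Set (Matrix (Fin n) (Fin n) ℝ))
    (hmul : ∀ a ∈ G, ∀ b ∈ G, a * b ∈ G)
    (hinv : ∀ a ∈ G, a⁻¹ ∈ G)
    (X : ℝ → Matrix (Fin n) (Fin n) ℝ → Matrix (Fin n) (Fin n) ℝ)
    (hGA : ∀ t, ∀ g ∈ G, ∀ h ∈ G,
      X t (h * g) = h * X t g + X t h * g - h * X t 1 * g)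
    (g gbar : ℝ → Matrix (Fin n) (Fin n) ℝ)
    (hgG : ∀ t, g t ∈ G) (hgbarG : ∀ t, gbar t ∈ G)
    (hunit : ∀ t, IsUnit (g t))
    (hdg : ∀ t, HasDerivAt g (X t (g t)) t)
    (hdgbar : ∀ t, HasDerivAt gbar (X t (gbar t)) t) :
    ∀ t, HasDerivAt (fun s => gbar s * (g s)⁻¹)
      (X t (gbar t * (g t)⁻¹) - (gbar t * (g t)⁻¹) * X t 1) t := by
  intro t
  have hdet := (isUnit_iff_isUnit_det _).mp (hunit t)
  have hX : IsGroupAffine G (X t) := hGA t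
  have key := hX.apply_mul_inv_sub (mul_nonsing_inv _ hdet) (nonsing_inv_mul _ hdet) (hgG t)
    (hmul _ (hgbarG t) _ (hinv _ (hgG t)))
  refine ((hdgbar t).mul ((hdg t).matrix_inv (hunit t))).congr_deriv ?_
  rw [← key]
  simp only [mul_neg, mul_assoc, sub_eq_add_neg]

/-- If `X_t` is group-affine and `ġ = X_t(g)`, `d/dt ḡ = X_t(ḡ)`, then the
right-invariant error `h = ḡ g⁻¹` satisfies `ḣ = X_t(h) − h X_t(e)`. -/
theorem right_error_of_group_affine (n : ℕ) (G : Set (Matrix (Fin n) (Fin n) ℝ))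
    (hone : (1 : Matrix (Fin n) (Fin n) ℝ) ∈ G)
    (hmul : ∀ a ∈ G, ∀ b ∈ G, a * b ∈ G)
    (hinv : ∀ a ∈ G, a⁻¹ ∈ G)
    (X : ℝ → Matrix (Fin n) (Fin n) ℝ → Matrix (Fin n) (Fin n) ℝ)
    (hGA : ∀ t, ∀ g ∈ G, ∀ h ∈ G,
      X t (h * g) = h * X t g + X t h * g - h * X t 1 * g)
    (g gbar : ℝ → Matrix (Fin n) (Fin n) ℝ)
    (hgG : ∀ t, g t ∈ G) (hgbarG : ∀ t, gbar t ∈ G)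
    (hunit : ∀ t, IsUnit (g t))
    (hdg : ∀ t, HasDerivAt g (X t (g t)) t)
    (hdgbar : ∀ t, HasDerivAt gbar (X t (gbar t)) t) :
    ∀ t, HasDerivAt (fun s => gbar s * (g s)⁻¹)
      (X t (gbar t * (g t)⁻¹) - (gbar t * (g t)⁻¹) * X t 1) t :=
  right_error_of_group_affine_general n G hmul hinv X hGA g gbar hgG hgbarG hunit hdg hdgbar
end
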